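/- arXiv:2001.09188 — 2 statements merged into one kernel-verified Lean document; each statement's English description precedes it below -/
import Mathlib

section
/- The average acceptance probability of Ensemble Rejection Sampling, p_ERS := ∑_{k=1}^N ∫_{X^N} (∏_{i=1}^N q(xⁱ)) · (w(x^k)/∑_{j=1}^N w(x^j)) · (Ẑ(x)/Z̄_k(x)) dμ^{⊗N}(x), satisfies p_ERS ≥ N·p_RS/(1 + (N−1)·p_RS), where p_RS := Z/w̄ is the average acceptance probability of standard rejection sampling. -/
/-!
Since `(w_k / ∑ w) · (Ẑ / Z̄_k) = w_k / (∑_{j ≠ k} w_j + w̄)` and, under `∏ q`, the `k`-th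
coordinate is independent of the others, every summand equals `Z · E[(T + w̄)⁻¹]`, where `T` is a
sum of `N - 1` independent weights of mean `Z`. Jensen's inequality for `t ↦ t⁻¹`, in the form of
its tangent line at `E[T] + w̄ = (N - 1) Z + w̄`, bounds this below by `Z / ((N - 1) Z + w̄)`.
-/

open MeasureTheory Finset

noncomputable section

/-- The ensemble estimate `Ẑ(x) = N⁻¹ ∑ᵢ w(xⁱ)`. -/
def ersZhat {X : Type*} (N : ℕ) (w : X → ℝ) (x : Fin N → X) : ℝ :=
  (N : ℝ)⁻¹ * ∑ i, w (x i)

/-- The upper bound `Z̄ₖ(x) = Ẑ(x) + N⁻¹ (w̄ - w(x^k))`. -/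
def ersZbar {X : Type*} (N : ℕ) (w : X → ℝ) (wbar : ℝ) (k : Fin N) (x : Fin N → X) : ℝ :=
  ersZhat N w x + (N : ℝ)⁻¹ * (wbar - w (x k))

theorem div_sum_mul_ersZhat_div_ersZbar {X : Type*} {N : ℕ} {w : X → ℝ} (wbar : ℝ) (k : Fin N)
    {x : Fin N → X} (hw : ∀ i, 0 ≤ w (x i)) :
    (w (x k) / ∑ j, w (x j)) * (ersZhat N w x / ersZbar N w wbar k x)
      = w (x k) / (∑ j, w (x j) - w (x k) + wbar) := by
  have hN : (N : ℝ)⁻¹ ≠ 0 := inv_ne_zero (Nat.cast_ne_zero.mpr (Fin.pos k).ne')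
  have hratio : ersZhat N w x / ersZbar N w wbar k x
      = (∑ j, w (x j)) / (∑ j, w (x j) - w (x k) + wbar) := by
    rw [ersZbar, ersZhat, ← mul_add, mul_div_mul_left _ _ hN, add_sub, add_sub_right_comm]
  set S := ∑ j, w (x j)
  rcases eq_or_ne S 0 with hS | hS
  · have : w (x k) = 0 :=
      le_antisymm (hS ▸ single_le_sum (fun j _ => hw j) (mem_univ k)) (hw k)
    simp [this]
  · rw [hratio, div_mul_div_comm, mul_comm S, mul_div_mul_right _ _ hS]

theorem two_mul_sub_div_sq_le_inv {a b : ℝ} (ha : 0 < a) (hb : 0 < b) :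
    (2 * a - b) / a ^ 2 ≤ b⁻¹ := by
  rw [div_le_iff₀ (by positivity)]
  field_simp
  nlinarith [sq_nonneg (a - b)]

theorem inv_integral_add_le_integral_div {Y : Type*} [MeasurableSpace Y] {ρ : Measure Y}
    {P T : Y → ℝ} {c : ℝ} (hc : 0 < c) (hP : ∀ y, 0 ≤ P y) (hT : ∀ y, 0 ≤ T y)
    (hPint : Integrable P ρ) (hP1 : ∫ y, P y ∂ρ = 1) (hTm : AEMeasurable T ρ)
    (hPT : Integrable (fun y => P y * T y) ρ) :
    (∫ y, P y * T y ∂ρ + c)⁻¹ ≤ ∫ y, P y / (T y + c) ∂ρ := by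
  set a := ∫ y, P y * T y ∂ρ + c
  have ha : 0 < a := by
    have : 0 ≤ ∫ y, P y * T y ∂ρ := integral_nonneg fun y => mul_nonneg (hP y) (hT y)
    linarith
  have hTc : ∀ y, 0 < T y + c := fun y => by linarith [hT y]
  -- the tangent line of `t ↦ t⁻¹` at `t = a`, weighted by `P`
  have htangent : ∀ y, ((2 * a - c) * P y - P y * T y) / a ^ 2 ≤ P y / (T y + c) := fun y => by
    calc ((2 * a - c) * P y - P y * T y) / a ^ 2 = P y * ((2 * a - (T y + c)) / a ^ 2) := by ring
      _ ≤ P y * (T y + c)⁻¹ :=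
        mul_le_mul_of_nonneg_left (two_mul_sub_div_sq_le_inv ha (hTc y)) (hP y)
      _ = P y / (T y + c) := rfl
  have hdiv : Integrable (fun y => P y / (T y + c)) ρ := by
    refine (hPint.div_const c).mono'
      (hPint.aemeasurable.div (hTm.add_const c)).aestronglyMeasurable (.of_forall fun y => ?_)
    rw [Real.norm_eq_abs, abs_of_nonneg (div_nonneg (hP y) (hTc y).le)]
    exact div_le_div_of_nonneg_left (hP y) hc (by linarith [hT y])
  calc a⁻¹ = ∫ y, ((2 * a - c) * P y - P y * T y) / a ^ 2 ∂ρ := by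
        rw [integral_div, integral_sub (hPint.const_mul _) hPT, integral_const_mul, hP1]
        field_simp
        ring
    _ ≤ _ := integral_mono (((hPint.const_mul _).sub hPT).div_const _) hdiv htangent

theorem prod_mul_apply_eq_mul_prod_removeNth {X : Type*} {n : ℕ} (q f : X → ℝ) (j : Fin (n + 1))
    (z : Fin (n + 1) → X) :
    (∏ i, q (z i)) * f (z j) = q (z j) * f (z j) * ∏ i, q (z (j.succAbove i)) := by
  rw [Fin.prod_univ_succAbove _ j]
  ring

section
variable {X : Type*} [MeasurableSpace X] {μ : Measure X}

theorem mul_ae_eq_of_eq_div {γ q w : X → ℝ} (hγ : ∀ x, 0 ≤ γ x) (hw : ∀ x, w x = γ x / q x)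
    (hnull : μ {x | 0 < γ x ∧ q x = 0} = 0) : (fun x => q x * w x) =ᵐ[μ] γ := by
  filter_upwards [measure_eq_zero_iff_ae_notMem.mp hnull] with x hx
  rcases eq_or_ne (q x) 0 with hq | hq
  · have : γ x = 0 := le_antisymm (not_lt.mp fun h => hx ⟨h, hq⟩) (hγ x)
    simp [hq, this]
  · rw [hw, mul_div_cancel₀ _ hq]

theorem integral_mul_le_integral_mul_of_ae_le {q w : X → ℝ} {b : ℝ} (hq : ∀ x, 0 ≤ q x)
    (hqint : Integrable q μ) (hqw : Integrable (fun x => q x * w x) μ)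
    (hwb : ∀ᵐ x ∂μ, 0 < q x → w x ≤ b) :
    ∫ x, q x * w x ∂μ ≤ (∫ x, q x ∂μ) * b := by
  rw [← integral_mul_const]
  refine integral_mono_ae hqw (hqint.mul_const b) ?_
  filter_upwards [hwb] with x hx
  rcases (hq x).eq_or_lt with h | h
  · simp [← h]
  · exact mul_le_mul_of_nonneg_left (hx h) h.le

variable [SigmaFinite μ] {n : ℕ}

theorem integral_pi_mul_removeNth (k : Fin (n + 1)) (f : X → ℝ) (g : (Fin n → X) → ℝ) :
    ∫ x : Fin (n + 1) → X, f (x k) * g (Fin.removeNth k x) ∂(Measure.pi fun _ => μ)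
      = (∫ y, f y ∂μ) * ∫ z, g z ∂(Measure.pi fun _ => μ) := by
  rw [← integral_prod_mul,
    ← (measurePreserving_piFinSuccAbove (fun _ => μ) k).integral_comp']
  rfl

theorem integrable_pi_mul_removeNth (k : Fin (n + 1)) {f : X → ℝ} {g : (Fin n → X) → ℝ}
    (hf : Integrable f μ) (hg : Integrable g (Measure.pi fun _ => μ)) :
    Integrable (fun x : Fin (n + 1) → X => f (x k) * g (Fin.removeNth k x))
      (Measure.pi fun _ => μ) :=
  (measurePreserving_piFinSuccAbove (fun _ => μ) k).integrable_comp_emb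
    (MeasurableEquiv.measurableEmbedding _) |>.mpr (hf.mul_prod hg)

theorem integral_pi_prod_mul_apply {q : X → ℝ} (hq1 : ∫ y, q y ∂μ = 1) (f : X → ℝ)
    (j : Fin n) :
    ∫ z : Fin n → X, (∏ i, q (z i)) * f (z j) ∂(Measure.pi fun _ => μ) = ∫ y, q y * f y ∂μ := by
  obtain ⟨m, rfl⟩ := Nat.exists_eq_add_one_of_ne_zero (Fin.pos j).ne'
  simp_rw [prod_mul_apply_eq_mul_prod_removeNth q f j]
  refine (integral_pi_mul_removeNth j (fun y => q y * f y) fun z => ∏ i, q (z i)).trans ?_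
  rw [integral_fintype_prod_eq_pow, hq1, one_pow, mul_one]

theorem integrable_pi_prod_mul_apply {q f : X → ℝ} (hq : Integrable q μ)
    (hqf : Integrable (fun y => q y * f y) μ) (j : Fin n) :
    Integrable (fun z : Fin n → X => (∏ i, q (z i)) * f (z j)) (Measure.pi fun _ => μ) := by
  obtain ⟨m, rfl⟩ := Nat.exists_eq_add_one_of_ne_zero (Fin.pos j).ne'
  simp_rw [prod_mul_apply_eq_mul_prod_removeNth q f j]
  exact integrable_pi_mul_removeNth j hqf (Integrable.fintype_prod fun _ => hq)

theorem integral_pi_prod_mul_sum {q f : X → ℝ} (hq : Integrable q μ) (hq1 : ∫ y, q y ∂μ = 1)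
    (hqf : Integrable (fun y => q y * f y) μ) :
    ∫ z : Fin n → X, (∏ i, q (z i)) * ∑ j, f (z j) ∂(Measure.pi fun _ => μ)
      = n * ∫ y, q y * f y ∂μ := by
  simp_rw [mul_sum]
  rw [integral_finsetSum _ fun j _ => integrable_pi_prod_mul_apply hq hqf j]
  simp [integral_pi_prod_mul_apply hq1]

theorem integrable_pi_prod_mul_sum {q f : X → ℝ} (hq : Integrable q μ)
    (hqf : Integrable (fun y => q y * f y) μ) :
    Integrable (fun z : Fin n → X => (∏ i, q (z i)) * ∑ j, f (z j)) (Measure.pi fun _ => μ) := by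
  simp_rw [mul_sum]
  exact integrable_finsetSum _ fun j _ => integrable_pi_prod_mul_apply hq hqf j

theorem integral_pi_prod_mul_div_sum_sub_add (q w : X → ℝ) (c : ℝ) (k : Fin (n + 1)) :
    ∫ x : Fin (n + 1) → X, (∏ i, q (x i)) * (w (x k) / (∑ j, w (x j) - w (x k) + c))
        ∂(Measure.pi fun _ => μ)
      = (∫ y, q y * w y ∂μ) *
          ∫ z : Fin n → X, (∏ i, q (z i)) / (∑ j, w (z j) + c) ∂(Measure.pi fun _ => μ) := by
  rw [← integral_pi_mul_removeNth k (fun y => q y * w y)]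
  congr 1 with x
  rw [Fin.prod_univ_succAbove _ k, Fin.sum_univ_succAbove _ k, add_sub_cancel_left]
  simp only [Fin.removeNth]
  ring
end


/-- The average acceptance probability of static Ensemble Rejection
Sampling satisfies `p_ERS ≥ N p_RS / (1 + (N-1) p_RS)` with `p_RS = Z/w̄`. -/
theorem ers_static_acceptance_bound
    {X : Type*} [MeasurableSpace X] (μ : Measure X) [SigmaFinite μ]
    (γ q : X → ℝ) (hγm : Measurable γ) (hqm : Measurable q)
    (hγnn : ∀ x, 0 ≤ γ x) (hqnn : ∀ x, 0 ≤ q x)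
    (hqprob : ∫ x, q x ∂μ = 1)
    (hnull : μ {x | 0 < γ x ∧ q x = 0} = 0)
    (Z : ℝ) (hZ : Z = ∫ x, γ x ∂μ) (hZpos : 0 < Z) (hγint : Integrable γ μ)
    (w : X → ℝ) (hw : ∀ x, w x = γ x / q x)
    (wbar : ℝ) (hwbound : ∀ᵐ x ∂μ, 0 < q x → 0 < w x ∧ w x ≤ wbar)
    (N : ℕ) (hN : 1 ≤ N) :
    ∑ k : Fin N, ∫ x : Fin N → X,
        (∏ i, q (x i)) * (w (x k) / ∑ j, w (x j)) *
          (ersZhat N w x / ersZbar N w wbar k x)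
        ∂(Measure.pi fun _ : Fin N => μ)
    ≥ (N : ℝ) * (Z / wbar) / (1 + ((N : ℝ) - 1) * (Z / wbar)) := by
  obtain ⟨n, rfl⟩ : ∃ n, N = n + 1 := ⟨N - 1, by omega⟩
  have hqint : Integrable q μ := .of_integral_ne_zero (by simp [hqprob])
  have hwnn : ∀ x, 0 ≤ w x := fun x => hw x ▸ div_nonneg (hγnn x) (hqnn x)
  have hwm : Measurable w := (funext hw : w = _) ▸ hγm.div hqm
  have hqw := mul_ae_eq_of_eq_div hγnn hw hnull
  have hqwint := hγint.congr hqw.symm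
  have hqwZ : ∫ x, q x * w x ∂μ = Z := by rw [integral_congr_ae hqw, hZ]
  have hZle : Z ≤ wbar := by
    simpa [hqwZ, hqprob] using integral_mul_le_integral_mul_of_ae_le hqnn hqint hqwint
      (hwbound.mono fun x hx hq => (hx hq).2)
  have hwbar : 0 < wbar := hZpos.trans_le hZle
  have hI := inv_integral_add_le_integral_div (ρ := Measure.pi fun _ : Fin n => μ) hwbar (fun z => prod_nonneg fun i _ => hqnn (z i))
    (fun z => sum_nonneg fun j _ => hwnn (z j)) (Integrable.fintype_prod fun _ => hqint)
    (by rw [integral_fintype_prod_eq_pow, hqprob, one_pow])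
    (by fun_prop : Measurable fun z : Fin n → X => ∑ j, w (z j)).aemeasurable
    (integrable_pi_prod_mul_sum hqint hqwint)
  rw [integral_pi_prod_mul_sum hqint hqprob hqwint, hqwZ] at hI
  simp_rw [mul_assoc _ (_ / _), div_sum_mul_ersZhat_div_ersZbar wbar _ fun i => hwnn _,
    integral_pi_prod_mul_div_sum_sub_add, hqwZ, sum_const, card_univ, Fintype.card_fin,
    nsmul_eq_mul]
  have hden : 0 < n * Z + wbar := by positivity
  calc _ = ((n + 1 : ℕ) : ℝ) * (Z * (n * Z + wbar)⁻¹) := by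
        rw [Nat.cast_add_one, add_sub_cancel_right]
        field_simp
        ring
    _ ≤ _ := by gcongr
end
end

section
/- Crude bound on the expected upper bound Z̄ under the auxiliary target π̃: fix k_{1:T} ∈ [N]^T and assume w₁ ≤ w̄₁ pointwise, w_t ≤ w̄_t pointwise, w̄_t¹ ≤ w̄_t pointwise and w̄_t² ≤ w̄_t pointwise for t = 2,…,T. Then ∫ Z̄_{k_{1:T}}(x) dπ̃_{k_{1:T}}(x) ≤ (1 − 1/N)^T · Z + (1 − (1 − 1/N)^T) · ∏_{t=1}^T w̄_t. -/
open MeasureTheory Finset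

noncomputable section

/- We index time by `Fin (T + 1)`, i.e. the state sequence has length `T + 1 ≥ 1`;
the paper's incremental weights `w_t`, `t = 2, …, T`, become `wt t`, `t : Fin T`. -/

/-- Path weight `w(x_{1:T}) = w₁(x₁) ∏_{t=2}^T w_t(x_{t-1}, x_t)`. -/
def pathW {X : Type*} (T : ℕ) (w1 : X → ℝ) (wt : Fin T → X → X → ℝ)
    (z : Fin (T + 1) → X) : ℝ :=
  w1 (z 0) * ∏ t : Fin T, wt t (z t.castSucc) (z t.succ)

/-- The upper bound `Z̄_{k_{1:T}}(x)` built from the modified weights `m₁, m_t`. -/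
def dZbar {X : Type*} (T N : ℕ) (w1 : X → ℝ) (wt : Fin T → X → X → ℝ)
    (wbar1 : ℝ) (wbar : Fin T → ℝ) (wbar1f wbar2f : Fin T → X → ℝ)
    (k : Fin (T + 1) → Fin N) (x : Fin (T + 1) → Fin N → X) : ℝ :=
  ((N : ℝ) ^ (T + 1))⁻¹ * ∑ i : Fin (T + 1) → Fin N,
    (if i 0 = k 0 then wbar1 else w1 (x 0 (i 0))) *
    ∏ t : Fin T,
      if i t.castSucc = k t.castSucc then
        (if i t.succ = k t.succ then wbar t else wbar2f t (x t.succ (i t.succ)))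
      else
        (if i t.succ = k t.succ then wbar1f t (x t.castSucc (i t.castSucc))
         else wt t (x t.castSucc (i t.castSucc)) (x t.succ (i t.succ)))

/-- Density of the auxiliary target `π̃_{k_{1:T}}` on the grid with respect to
`μ^{⊗TN}`: the selected path has density `π = γ/Z` and the remaining coordinates are
independent with densities `q_t`. -/
def piTildeDens {X : Type*} (T N : ℕ) (w1 : X → ℝ) (wt : Fin T → X → X → ℝ)
    (q : Fin (T + 1) → X → ℝ) (Z : ℝ)
    (k : Fin (T + 1) → Fin N) (x : Fin (T + 1) → Fin N → X) : ℝ :=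
  (pathW T w1 wt (fun t => x t (k t)) * (∏ t, q t (x t (k t))) / Z) *
    ∏ t, ∏ i ∈ Finset.univ.erase (k t), q t (x t i)


/-!
Split the sum defining `Z̄` according to whether the path `i` avoids the selected path `k` at
every time. Such a path meets only unmodified weights, so its term is `w(x^i)`; under `π̃` its
coordinates are independent of the selected path and have law `∏ₜ qₜ`, so `E[w(x^i)] = Z`.
There are `(N - 1)^T` of them, and each of the remaining `N^T - (N - 1)^T` terms is at most
`∏ₜ w̄ₜ`.

Concretely, `π̃` is the law of the grid with independent coordinates `x t j ~ q t` tilted by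
`w(x^k) / Z`, and the pair `(x^i, x^k)` of disjoint paths of that grid has law `P ⊗ P` with
`P = ⊗ₜ qₜ μ`.
-/

open scoped ENNReal

namespace MeasureTheory

theorem lintegral_fin_nat_prod_eq_prod {n : ℕ} {E : Fin n → Type*}
    [∀ i, MeasurableSpace (E i)] (μ : ∀ i, Measure (E i)) [∀ i, SigmaFinite (μ i)]
    {f : ∀ i, E i → ℝ≥0∞} (hf : ∀ i, Measurable (f i)) :
    ∫⁻ x, ∏ i, f i (x i) ∂Measure.pi μ = ∏ i, ∫⁻ y, f i y ∂μ i := by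
  induction n with
  | zero => simp
  | succ n ih =>
    calc _ = ∫⁻ x : E 0 × (∀ i : Fin n, E ((0 : Fin (n + 1)).succAbove i)),
            f 0 x.1 * ∏ i : Fin n, f _ (x.2 i)
            ∂(μ 0).prod (Measure.pi fun i => μ ((0 : Fin (n + 1)).succAbove i)) := by
          rw [← (measurePreserving_piFinSuccAbove μ 0).lintegral_comp_emb
            (MeasurableEquiv.measurableEmbedding _)]
          refine lintegral_congr fun x => ?_
          rw [Fin.prod_univ_succAbove _ 0]
          rfl
      _ = (∫⁻ y, f 0 y ∂μ 0) *
            ∏ i : Fin n, ∫⁻ y, f _ y ∂μ ((0 : Fin (n + 1)).succAbove i) := by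
          rw [← ih _ fun i => hf _]
          exact lintegral_prod_mul (hf 0).aemeasurable
            (Finset.measurable_prod _ fun i _ => (hf _).comp (measurable_pi_apply i)).aemeasurable
      _ = _ := (Fin.prod_univ_succAbove (fun i => ∫⁻ y, f i y ∂μ i) 0).symm

section PiWithDensity

variable {ι : Type*} [Fintype ι] {E : ι → Type*} [∀ i, MeasurableSpace (E i)]
  (μ : ∀ i, Measure (E i)) [∀ i, SigmaFinite (μ i)]

theorem lintegral_fintype_prod_eq_prod {f : ∀ i, E i → ℝ≥0∞}
    (hf : ∀ i, Measurable (f i)) :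
    ∫⁻ x, ∏ i, f i (x i) ∂Measure.pi μ = ∏ i, ∫⁻ y, f i y ∂μ i := by
  let e := (Fintype.equivFin ι).symm
  rw [← (measurePreserving_piCongrLeft μ e).lintegral_comp_emb
    (MeasurableEquiv.measurableEmbedding _)]
  simp_rw [← e.prod_comp, MeasurableEquiv.coe_piCongrLeft, Equiv.piCongrLeft_apply_apply]
  exact lintegral_fin_nat_prod_eq_prod _ fun i => hf (e i)

theorem Measure.pi_withDensity {f : ∀ i, E i → ℝ≥0∞} (hf : ∀ i, Measurable (f i))
    [∀ i, SigmaFinite ((μ i).withDensity (f i))] :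
    Measure.pi (fun i => (μ i).withDensity (f i)) =
      (Measure.pi μ).withDensity fun x => ∏ i, f i (x i) := by
  classical
  refine Measure.pi_eq fun s hs => ?_
  have hind : (Set.univ.pi s).indicator (fun x => ∏ i, f i (x i)) =
      fun x => ∏ i, (s i).indicator (f i) (x i) := by
    ext x
    simp [Set.indicator_apply, prod_ite_zero]
  rw [withDensity_apply _ (MeasurableSet.univ_pi hs),
    ← lintegral_indicator (MeasurableSet.univ_pi hs), hind,
    lintegral_fintype_prod_eq_prod μ fun i => (hf i).indicator (hs i)]
  simp_rw [lintegral_indicator (hs _), withDensity_apply _ (hs _)]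

theorem Measure.pi_withDensity_ofReal {q : ∀ i, E i → ℝ} (hqm : ∀ i, Measurable (q i))
    (hq : ∀ i y, 0 ≤ q i y) :
    Measure.pi (fun i => (μ i).withDensity fun y => ENNReal.ofReal (q i y)) =
      (Measure.pi μ).withDensity fun x => ENNReal.ofReal (∏ i, q i (x i)) := by
  simp_rw [Measure.pi_withDensity μ fun i => (hqm i).ennreal_ofReal,
    ENNReal.ofReal_prod_of_nonneg fun i _ => hq i _]

end PiWithDensity

theorem Measure.pi_pi_withDensity_ofReal {ι α X : Type*} [Fintype ι] [Fintype α]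
    [MeasurableSpace X] (μ : Measure X) [SigmaFinite μ] {q : ι → X → ℝ}
    (hqm : ∀ t, Measurable (q t)) (hq : ∀ t y, 0 ≤ q t y) :
    (Measure.pi fun t => Measure.pi fun _ : α => μ.withDensity fun y => ENNReal.ofReal (q t y)) =
      (Measure.pi fun _ : ι => Measure.pi fun _ : α => μ).withDensity
        fun x => ENNReal.ofReal (∏ t, ∏ j, q t (x t j)) := by
  have hinner : ∀ t, (Measure.pi fun _ : α => μ.withDensity fun y => ENNReal.ofReal (q t y)) =
      (Measure.pi fun _ : α => μ).withDensity fun y => ENNReal.ofReal (∏ j, q t (y j)) :=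
    fun t => Measure.pi_withDensity_ofReal _ (fun _ => hqm t) fun _ => hq t
  simp_rw [hinner]
  exact Measure.pi_withDensity_ofReal _
    (fun t => Finset.measurable_prod _ fun j _ => (hqm t).comp (measurable_pi_apply j))
    fun t y => prod_nonneg fun j _ => hq t (y j)

section WithDensityOfReal

variable {X : Type*} [MeasurableSpace X] {μ : Measure X} {f : X → ℝ}

theorem integral_withDensity_ofReal (hfm : Measurable f) (hf : ∀ x, 0 ≤ f x) (g : X → ℝ) :
    ∫ x, g x ∂μ.withDensity (fun x => ENNReal.ofReal (f x)) = ∫ x, g x * f x ∂μ := by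
  rw [integral_withDensity_eq_integral_toReal_smul hfm.ennreal_ofReal
    (ae_of_all _ fun _ => ENNReal.ofReal_lt_top)]
  simp_rw [ENNReal.toReal_ofReal (hf _), smul_eq_mul, mul_comm (f _)]

theorem integrable_withDensity_ofReal_iff (hfm : Measurable f) (hf : ∀ x, 0 ≤ f x)
    {g : X → ℝ} :
    Integrable g (μ.withDensity fun x => ENNReal.ofReal (f x)) ↔
      Integrable (fun x => g x * f x) μ := by
  rw [integrable_withDensity_iff_integrable_smul' hfm.ennreal_ofReal
    (ae_of_all _ fun _ => ENNReal.ofReal_lt_top)]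
  simp_rw [ENNReal.toReal_ofReal (hf _), smul_eq_mul, mul_comm (f _)]

theorem isProbabilityMeasure_withDensity_ofReal (hf : ∀ x, 0 ≤ f x)
    (hf1 : ∫ x, f x ∂μ = 1) :
    IsProbabilityMeasure (μ.withDensity fun x => ENNReal.ofReal (f x)) := by
  have hint : Integrable f μ := Integrable.of_integral_ne_zero (by simp [hf1])
  constructor
  rw [withDensity_apply _ MeasurableSet.univ, setLIntegral_univ,
    ← ofReal_integral_eq_lintegral_ofReal hint (ae_of_all _ hf), hf1, ENNReal.ofReal_one]

end WithDensityOfReal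

theorem MeasurePreserving.integral_comp_of_aestronglyMeasurable {α β E : Type*}
    [MeasurableSpace α] [MeasurableSpace β] [NormedAddCommGroup E] [NormedSpace ℝ E]
    {μ : Measure α} {ν : Measure β} {f : α → β} (h : MeasurePreserving f μ ν)
    {g : β → E} (hg : AEStronglyMeasurable g ν) :
    ∫ x, g (f x) ∂μ = ∫ y, g y ∂ν := by
  rw [← h.map_eq] at hg
  rw [← integral_map h.measurable.aemeasurable hg, h.map_eq]

theorem measurePreserving_eval_pair {α : Type*} [Fintype α] {Ω : α → Type*}
    [∀ a, MeasurableSpace (Ω a)] (μ : ∀ a, Measure (Ω a))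
    [∀ a, IsProbabilityMeasure (μ a)]
    {a b : α} (hab : a ≠ b) :
    MeasurePreserving (fun x => (x a, x b)) (Measure.pi μ) ((μ a).prod (μ b)) := by
  refine ⟨(measurable_pi_apply a).prodMk (measurable_pi_apply b), ?_⟩
  have hindep := (ProbabilityTheory.iIndepFun_pi (μ := μ) (X := fun _ => id)
    fun _ => aemeasurable_id).indepFun hab
  rw [hindep.map_prod_eq_prod_map_map (measurable_pi_apply a).aemeasurable
    (measurable_pi_apply b).aemeasurable, (measurePreserving_eval μ a).map_eq,
    (measurePreserving_eval μ b).map_eq]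

end MeasureTheory

section Grid

variable {ι α X : Type*} [Fintype ι] [Fintype α] [MeasurableSpace X]
  (ρ : ι → Measure X) [∀ t, IsProbabilityMeasure (ρ t)]

theorem measurePreserving_gridPath (i : ι → α) :
    MeasurePreserving (fun (x : ι → α → X) t => x t (i t))
      (Measure.pi fun t => Measure.pi fun _ : α => ρ t) (Measure.pi ρ) :=
  measurePreserving_pi _ _ fun t => measurePreserving_eval _ (i t)

theorem measurePreserving_gridPath_pair {i j : ι → α} (hij : ∀ t, i t ≠ j t) :
    MeasurePreserving (fun (x : ι → α → X) => ((fun t => x t (i t)), fun t => x t (j t)))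
      (Measure.pi fun t => Measure.pi fun _ : α => ρ t)
      ((Measure.pi ρ).prod (Measure.pi ρ)) :=
  (measurePreserving_arrowProdEquivProdArrow X X ι ρ ρ).comp
    (measurePreserving_pi _ _ (f := fun t (y : α → X) => (y (i t), y (j t)))
      fun t => measurePreserving_eval_pair _ (hij t))

variable {ρ}

theorem integral_gridPath (i : ι → α) {f : (ι → X) → ℝ}
    (hf : AEStronglyMeasurable f (Measure.pi ρ)) :
    ∫ x, f (fun t => x t (i t)) ∂(Measure.pi fun t => Measure.pi fun _ : α => ρ t) =
      ∫ z, f z ∂Measure.pi ρ :=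
  (measurePreserving_gridPath ρ i).integral_comp_of_aestronglyMeasurable hf

theorem integrable_gridPath (i : ι → α) {f : (ι → X) → ℝ}
    (hf : Integrable f (Measure.pi ρ)) :
    Integrable (fun x => f fun t => x t (i t))
      (Measure.pi fun t => Measure.pi fun _ : α => ρ t) :=
  (measurePreserving_gridPath ρ i).integrable_comp_of_integrable hf

theorem integrable_gridPath_mul {i j : ι → α} (hij : ∀ t, i t ≠ j t)
    {f g : (ι → X) → ℝ}
    (hf : Integrable f (Measure.pi ρ)) (hg : Integrable g (Measure.pi ρ)) :
    Integrable (fun x => f (fun t => x t (i t)) * g fun t => x t (j t))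
      (Measure.pi fun t => Measure.pi fun _ : α => ρ t) :=
  (measurePreserving_gridPath_pair ρ hij).integrable_comp_of_integrable (hf.mul_prod hg)

theorem integral_gridPath_mul {i j : ι → α} (hij : ∀ t, i t ≠ j t)
    {f g : (ι → X) → ℝ}
    (hf : AEStronglyMeasurable f (Measure.pi ρ)) (hg : AEStronglyMeasurable g (Measure.pi ρ)) :
    ∫ x, f (fun t => x t (i t)) * g (fun t => x t (j t))
        ∂(Measure.pi fun t => Measure.pi fun _ : α => ρ t) =
      (∫ z, f z ∂Measure.pi ρ) * ∫ z, g z ∂Measure.pi ρ := by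
  rw [← integral_prod_mul]
  exact (measurePreserving_gridPath_pair ρ hij).integral_comp_of_aestronglyMeasurable
    (g := fun z => f z.1 * g z.2) (hf.comp_fst.mul hg.comp_snd)

end Grid
theorem card_piFinset_erase {ι α : Type*} [Fintype ι] [DecidableEq ι] [Fintype α]
    [DecidableEq α] [Nonempty α] (k : ι → α) :
    (#(Fintype.piFinset fun t => univ.erase (k t)) : ℝ) =
      ((Fintype.card α : ℝ) - 1) ^ Fintype.card ι := by
  simp [Nat.cast_sub Fintype.card_pos]

theorem integral_mul_le_of_le_sum {Ω ι : Type*} [MeasurableSpace Ω] {ν : Measure Ω}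
    {F ρ : Ω → ℝ} {h : ι → Ω → ℝ} (s : Finset ι) {c b Z : ℝ}
    (hF : ∀ x, 0 ≤ F x) (hρ : ∀ x, 0 ≤ ρ x)
    (hFle : ∀ x, F x ≤ c * ∑ i ∈ s, h i x + b)
    (hρ1 : Integrable ρ ν ∧ ∫ x, ρ x ∂ν = 1)
    (hh : ∀ i ∈ s, Integrable (fun x => h i x * ρ x) ν ∧ ∫ x, h i x * ρ x ∂ν = Z) :
    ∫ x, F x * ρ x ∂ν ≤ c * #s * Z + b := by
  have hsplit : ∀ x,
      (c * ∑ i ∈ s, h i x + b) * ρ x = c * ∑ i ∈ s, h i x * ρ x + b * ρ x := by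
    intro x
    rw [add_mul, mul_assoc, sum_mul]
  have hsum : Integrable (fun x => ∑ i ∈ s, h i x * ρ x) ν :=
    integrable_finsetSum _ fun i hi => (hh i hi).1
  calc ∫ x, F x * ρ x ∂ν ≤ ∫ x, (c * ∑ i ∈ s, h i x + b) * ρ x ∂ν := by
        refine integral_mono_of_nonneg (ae_of_all _ fun x => mul_nonneg (hF x) (hρ x)) ?_
          (ae_of_all _ fun x => mul_le_mul_of_nonneg_right (hFle x) (hρ x))
        simp_rw [hsplit]
        exact (hsum.const_mul c).add (hρ1.1.const_mul b)
    _ = c * ∑ i ∈ s, ∫ x, h i x * ρ x ∂ν + b * ∫ x, ρ x ∂ν := by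
        simp_rw [hsplit]
        rw [integral_add (hsum.const_mul c) (hρ1.1.const_mul b), integral_const_mul,
          integral_const_mul, integral_finsetSum _ fun i hi => (hh i hi).1]
    _ = c * #s * Z + b := by
        rw [sum_congr rfl fun i hi => (hh i hi).2, hρ1.2, sum_const, nsmul_eq_mul]
        ring

theorem mul_prod_mem_Icc {ι : Type*} (s : Finset ι) {a A : ℝ} {b B : ι → ℝ}
    (ha : a ∈ Set.Icc 0 A) (hb : ∀ i ∈ s, b i ∈ Set.Icc 0 (B i)) :
    a * ∏ i ∈ s, b i ∈ Set.Icc 0 (A * ∏ i ∈ s, B i) :=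
  ⟨mul_nonneg ha.1 (prod_nonneg fun i hi => (hb i hi).1),
    mul_le_mul ha.2 (prod_le_prod (fun i hi => (hb i hi).1) fun i hi => (hb i hi).2)
      (prod_nonneg fun i hi => (hb i hi).1) (ha.1.trans ha.2)⟩

section ModifiedWeights

variable {X : Type*} {T N : ℕ} (w1 : X → ℝ) (wt : Fin T → X → X → ℝ) (wbar1 : ℝ)
  (wbar : Fin T → ℝ) (wbar1f wbar2f : Fin T → X → ℝ) (k : Fin (T + 1) → Fin N)
  (x : Fin (T + 1) → Fin N → X) (i : Fin (T + 1) → Fin N)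

/-- The modified weight `m₁(i₁)` along the path `i`. -/
def modW1 : ℝ :=
  if i 0 = k 0 then wbar1 else w1 (x 0 (i 0))

/-- The modified weight `m_{t+2}(i_{t+1}, i_{t+2})` along the path `i`, in the paper's 1-based
time. -/
def modWt (t : Fin T) : ℝ :=
  if i t.castSucc = k t.castSucc then
    (if i t.succ = k t.succ then wbar t else wbar2f t (x t.succ (i t.succ)))
  else
    (if i t.succ = k t.succ then wbar1f t (x t.castSucc (i t.castSucc))
     else wt t (x t.castSucc (i t.castSucc)) (x t.succ (i t.succ)))

theorem dZbar_eq_sum :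
    dZbar T N w1 wt wbar1 wbar wbar1f wbar2f k x =
      ((N : ℝ) ^ (T + 1))⁻¹ *
        ∑ i, modW1 w1 wbar1 k x i * ∏ t, modWt wt wbar wbar1f wbar2f k x i t :=
  rfl

variable {i} in
theorem modW1_mul_prod_modWt_of_forall_ne (hik : ∀ t, i t ≠ k t) :
    modW1 w1 wbar1 k x i * ∏ t, modWt wt wbar wbar1f wbar2f k x i t =
      pathW T w1 wt fun t => x t (i t) := by
  simp only [modW1, modWt, pathW, if_neg (hik _)]

variable {w1 wt wbar1 wbar wbar1f wbar2f}

theorem modW1_mem_Icc (hw1 : ∀ y, w1 y ∈ Set.Icc 0 wbar1) :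
    modW1 w1 wbar1 k x i ∈ Set.Icc 0 wbar1 := by
  unfold modW1
  split_ifs
  exacts [⟨(hw1 (x 0 (i 0))).1.trans (hw1 _).2, le_rfl⟩, hw1 _]

theorem modWt_mem_Icc (hwt : ∀ t y y', wt t y y' ∈ Set.Icc 0 (wbar t))
    (hwbar1f : ∀ t y, wbar1f t y ∈ Set.Icc 0 (wbar t))
    (hwbar2f : ∀ t y, wbar2f t y ∈ Set.Icc 0 (wbar t)) (t : Fin T) :
    modWt wt wbar wbar1f wbar2f k x i t ∈ Set.Icc 0 (wbar t) := by
  unfold modWt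
  split_ifs
  exacts [⟨(hwt t (x 0 (i 0)) (x 0 (i 0))).1.trans (hwt t _ _).2, le_rfl⟩, hwbar2f t _,
    hwbar1f t _, hwt t _ _]

theorem dZbar_nonneg (hw1 : ∀ y, w1 y ∈ Set.Icc 0 wbar1)
    (hwt : ∀ t y y', wt t y y' ∈ Set.Icc 0 (wbar t))
    (hwbar1f : ∀ t y, wbar1f t y ∈ Set.Icc 0 (wbar t))
    (hwbar2f : ∀ t y, wbar2f t y ∈ Set.Icc 0 (wbar t)) :
    0 ≤ dZbar T N w1 wt wbar1 wbar wbar1f wbar2f k x :=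
  mul_nonneg (by positivity) <| sum_nonneg fun i _ =>
    (mul_prod_mem_Icc _ (modW1_mem_Icc k x i hw1) fun t _ =>
      modWt_mem_Icc k x i hwt hwbar1f hwbar2f t).1

theorem dZbar_le (hw1 : ∀ y, w1 y ∈ Set.Icc 0 wbar1)
    (hwt : ∀ t y y', wt t y y' ∈ Set.Icc 0 (wbar t))
    (hwbar1f : ∀ t y, wbar1f t y ∈ Set.Icc 0 (wbar t))
    (hwbar2f : ∀ t y, wbar2f t y ∈ Set.Icc 0 (wbar t)) :
    dZbar T N w1 wt wbar1 wbar wbar1f wbar2f k x ≤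
      ((N : ℝ) ^ (T + 1))⁻¹ * ∑ i ∈ Fintype.piFinset (fun t => univ.erase (k t)),
          pathW T w1 wt (fun t => x t (i t)) +
        (1 - (1 - 1 / (N : ℝ)) ^ (T + 1)) * (wbar1 * ∏ t, wbar t) := by
  set A := Fintype.piFinset fun t => univ.erase (k t)
  have : Nonempty (Fin N) := ⟨k 0⟩
  have hN : (N : ℝ) ≠ 0 := Nat.cast_ne_zero.2 (k 0).pos.ne'
  have hAc : (#Aᶜ : ℝ) = (N : ℝ) ^ (T + 1) - ((N : ℝ) - 1) ^ (T + 1) := by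
    rw [card_compl, Nat.cast_sub (card_le_univ _), card_piFinset_erase]
    simp
  rw [dZbar_eq_sum, ← sum_add_sum_compl A, mul_add, sum_congr rfl fun i hi =>
    modW1_mul_prod_modWt_of_forall_ne w1 wt wbar1 wbar wbar1f wbar2f k x (by simpa [A] using hi)]
  refine (add_le_add_iff_left _).2 ?_
  calc _ ≤ ((N : ℝ) ^ (T + 1))⁻¹ * (#Aᶜ • (wbar1 * ∏ t, wbar t)) := by
        gcongr
        exact sum_le_card_nsmul _ _ _ fun i _ => (mul_prod_mem_Icc _ (modW1_mem_Icc k x i hw1)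
          fun t _ => modWt_mem_Icc k x i hwt hwbar1f hwbar2f t).2
    _ = _ := by
        rw [nsmul_eq_mul, hAc, one_sub_div hN, div_pow]
        field_simp

end ModifiedWeights
section PiTilde

variable {X : Type*} {T N : ℕ} {w1 : X → ℝ} {wt : Fin T → X → X → ℝ}
  {q : Fin (T + 1) → X → ℝ} {Z : ℝ}

theorem piTildeDens_eq (k : Fin (T + 1) → Fin N) (x : Fin (T + 1) → Fin N → X) :
    piTildeDens T N w1 wt q Z k x =
      pathW T w1 wt (fun t => x t (k t)) / Z * ∏ t, ∏ j, q t (x t j) := by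
  have hsplit : ∀ t,
      ∏ j, q t (x t j) = q t (x t (k t)) * ∏ j ∈ univ.erase (k t), q t (x t j) :=
    fun t => (mul_prod_erase univ _ (mem_univ _)).symm
  rw [piTildeDens, prod_congr rfl fun t _ => hsplit t, prod_mul_distrib]
  ring

theorem piTildeDens_nonneg (hw1nn : ∀ y, 0 ≤ w1 y) (hwtnn : ∀ t y y', 0 ≤ wt t y y')
    (hq : ∀ t y, 0 ≤ q t y) (hZ : 0 ≤ Z) (k : Fin (T + 1) → Fin N)
    (x : Fin (T + 1) → Fin N → X) : 0 ≤ piTildeDens T N w1 wt q Z k x := by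
  rw [piTildeDens_eq]
  exact mul_nonneg (div_nonneg (mul_nonneg (hw1nn _) (prod_nonneg fun t _ => hwtnn t _ _)) hZ)
    (prod_nonneg fun t _ => prod_nonneg fun j _ => hq t _)

variable [MeasurableSpace X] {μ : Measure X} [SigmaFinite μ] {ρ : Fin (T + 1) → Measure X}

theorem integrable_and_integral_mul_piTildeDens (hqm : ∀ t, Measurable (q t))
    (hq : ∀ t y, 0 ≤ q t y) (hρ : ∀ t, ρ t = μ.withDensity fun y => ENNReal.ofReal (q t y))
    (k : Fin (T + 1) → Fin N) {g : (Fin (T + 1) → Fin N → X) → ℝ}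
    (hg : Integrable (fun x => g x * pathW T w1 wt (fun t => x t (k t)))
      (Measure.pi fun t => Measure.pi fun _ : Fin N => ρ t)) :
    Integrable (fun x => g x * piTildeDens T N w1 wt q Z k x)
        (Measure.pi fun _ : Fin (T + 1) => Measure.pi fun _ : Fin N => μ) ∧
      ∫ x, g x * piTildeDens T N w1 wt q Z k x
          ∂(Measure.pi fun _ : Fin (T + 1) => Measure.pi fun _ : Fin N => μ) =
        (∫ x, g x * pathW T w1 wt (fun t => x t (k t))
          ∂(Measure.pi fun t => Measure.pi fun _ : Fin N => ρ t)) / Z := by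
  obtain rfl : ρ = fun t => μ.withDensity fun y => ENNReal.ofReal (q t y) := funext hρ
  have hD : Measurable fun x : Fin (T + 1) → Fin N → X => ∏ t, ∏ j, q t (x t j) := by
    fun_prop
  have hDnn : ∀ x : Fin (T + 1) → Fin N → X, 0 ≤ ∏ t, ∏ j, q t (x t j) :=
    fun x => prod_nonneg fun t _ => prod_nonneg fun j _ => hq t _
  have hpt : ∀ x, g x * piTildeDens T N w1 wt q Z k x =
      g x * pathW T w1 wt (fun t => x t (k t)) * (∏ t, ∏ j, q t (x t j)) / Z := by
    intro x
    rw [piTildeDens_eq]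
    ring
  rw [Measure.pi_pi_withDensity_ofReal μ hqm hq, integrable_withDensity_ofReal_iff hD hDnn]
    at hg
  simp_rw [hpt, Measure.pi_pi_withDensity_ofReal μ hqm hq, integral_withDensity_ofReal hD hDnn]
  exact ⟨hg.div_const Z, integral_div _ _⟩

theorem integrable_and_integral_pathW (hqm : ∀ t, Measurable (q t)) (hq : ∀ t y, 0 ≤ q t y)
    (hρ : ∀ t, ρ t = μ.withDensity fun y => ENNReal.ofReal (q t y))
    (hZ : Z = ∫ z : Fin (T + 1) → X, pathW T w1 wt z * ∏ t, q t (z t)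
        ∂(Measure.pi fun _ : Fin (T + 1) => μ))
    (hγint : Integrable (fun z : Fin (T + 1) → X => pathW T w1 wt z * ∏ t, q t (z t))
        (Measure.pi fun _ : Fin (T + 1) => μ)) :
    Integrable (pathW T w1 wt) (Measure.pi ρ) ∧ ∫ z, pathW T w1 wt z ∂Measure.pi ρ = Z := by
  have hD : Measurable fun z : Fin (T + 1) → X => ∏ t, q t (z t) := by fun_prop
  have hDnn : ∀ z : Fin (T + 1) → X, 0 ≤ ∏ t, q t (z t) :=
    fun z => prod_nonneg fun t _ => hq t _
  rw [funext hρ, Measure.pi_withDensity_ofReal _ hqm hq, integrable_withDensity_ofReal_iff hD hDnn,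
    integral_withDensity_ofReal hD hDnn]
  exact ⟨hγint, hZ.symm⟩

variable [∀ t, IsProbabilityMeasure (ρ t)]

theorem integrable_and_integral_piTildeDens (hqm : ∀ t, Measurable (q t))
    (hq : ∀ t y, 0 ≤ q t y) (hρ : ∀ t, ρ t = μ.withDensity fun y => ENNReal.ofReal (q t y))
    (hWint : Integrable (pathW T w1 wt) (Measure.pi ρ))
    (hWZ : ∫ z, pathW T w1 wt z ∂Measure.pi ρ = Z) (hZ : Z ≠ 0) (k : Fin (T + 1) → Fin N) :
    Integrable (piTildeDens T N w1 wt q Z k)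
        (Measure.pi fun _ : Fin (T + 1) => Measure.pi fun _ : Fin N => μ) ∧
      ∫ x, piTildeDens T N w1 wt q Z k x
          ∂(Measure.pi fun _ : Fin (T + 1) => Measure.pi fun _ : Fin N => μ) = 1 := by
  have h := integrable_and_integral_mul_piTildeDens (Z := Z) hqm hq hρ k (g := fun _ => 1)
    (by simpa using integrable_gridPath k hWint)
  simp only [one_mul] at h
  rwa [integral_gridPath k hWint.1, hWZ, div_self hZ] at h

theorem integrable_and_integral_pathW_mul_piTildeDens (hqm : ∀ t, Measurable (q t))
    (hq : ∀ t y, 0 ≤ q t y) (hρ : ∀ t, ρ t = μ.withDensity fun y => ENNReal.ofReal (q t y))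
    (hWint : Integrable (pathW T w1 wt) (Measure.pi ρ))
    (hWZ : ∫ z, pathW T w1 wt z ∂Measure.pi ρ = Z) (hZ : Z ≠ 0) {i k : Fin (T + 1) → Fin N}
    (hik : ∀ t, i t ≠ k t) :
    Integrable (fun x => pathW T w1 wt (fun t => x t (i t)) * piTildeDens T N w1 wt q Z k x)
        (Measure.pi fun _ : Fin (T + 1) => Measure.pi fun _ : Fin N => μ) ∧
      ∫ x, pathW T w1 wt (fun t => x t (i t)) * piTildeDens T N w1 wt q Z k x
          ∂(Measure.pi fun _ : Fin (T + 1) => Measure.pi fun _ : Fin N => μ) = Z := by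
  obtain ⟨hint, hval⟩ := integrable_and_integral_mul_piTildeDens hqm hq hρ k
    (integrable_gridPath_mul hik hWint hWint)
  refine ⟨hint, ?_⟩
  rw [hval, integral_gridPath_mul hik hWint.1 hWint.1, hWZ, mul_div_cancel_right₀ Z hZ]

end PiTilde

theorem expected_dZbar_crude_bound_general
    {X : Type*} [MeasurableSpace X] (μ : Measure X) [SigmaFinite μ]
    (T N : ℕ)
    (q : Fin (T + 1) → X → ℝ)
    (hqm : ∀ t, Measurable (q t)) (hqpos : ∀ t y, 0 < q t y)
    (hqprob : ∀ t, ∫ y, q t y ∂μ = 1)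
    (w1 : X → ℝ) (wt : Fin T → X → X → ℝ)
    (hw1nn : ∀ y, 0 ≤ w1 y) (hwtnn : ∀ t y y', 0 ≤ wt t y y')
    (Z : ℝ)
    (hZ : Z = ∫ z : Fin (T + 1) → X, pathW T w1 wt z * ∏ t, q t (z t)
        ∂(Measure.pi fun _ : Fin (T + 1) => μ))
    (hZpos : 0 < Z)
    (hγint : Integrable (fun z : Fin (T + 1) → X => pathW T w1 wt z * ∏ t, q t (z t))
        (Measure.pi fun _ : Fin (T + 1) => μ))
    (wbar1 : ℝ) (wbar : Fin T → ℝ) (wbar1f wbar2f : Fin T → X → ℝ)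
    (hwbar1fnn : ∀ t y, 0 ≤ wbar1f t y) (hwbar2fnn : ∀ t y, 0 ≤ wbar2f t y)
    (hw1le : ∀ y, w1 y ≤ wbar1)
    (hwtle : ∀ t y y', wt t y y' ≤ wbar t)
    (hwbar1fle : ∀ t y, wbar1f t y ≤ wbar t)
    (hwbar2fle : ∀ t y, wbar2f t y ≤ wbar t)
    (k : Fin (T + 1) → Fin N) :
    ∫ x : Fin (T + 1) → Fin N → X,
        dZbar T N w1 wt wbar1 wbar wbar1f wbar2f k x *
          piTildeDens T N w1 wt q Z k x
        ∂(Measure.pi fun _ : Fin (T + 1) => Measure.pi fun _ : Fin N => μ)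
      ≤ (1 - 1 / (N : ℝ)) ^ (T + 1) * Z +
        (1 - (1 - 1 / (N : ℝ)) ^ (T + 1)) * (wbar1 * ∏ t, wbar t) := by
  have hq : ∀ t y, 0 ≤ q t y := fun t y => (hqpos t y).le
  set ρ : Fin (T + 1) → Measure X := fun t => μ.withDensity fun y => ENNReal.ofReal (q t y)
  have : ∀ t, IsProbabilityMeasure (ρ t) :=
    fun t => isProbabilityMeasure_withDensity_ofReal (hq t) (hqprob t)
  obtain ⟨hWint, hWZ⟩ := integrable_and_integral_pathW hqm hq (fun _ => rfl) hZ hγint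
  have hw1 : ∀ y, w1 y ∈ Set.Icc 0 wbar1 := fun y => ⟨hw1nn y, hw1le y⟩
  have hwt : ∀ t y y', wt t y y' ∈ Set.Icc 0 (wbar t) :=
    fun t y y' => ⟨hwtnn t y y', hwtle t y y'⟩
  have hwbar1f : ∀ t y, wbar1f t y ∈ Set.Icc 0 (wbar t) :=
    fun t y => ⟨hwbar1fnn t y, hwbar1fle t y⟩
  have hwbar2f : ∀ t y, wbar2f t y ∈ Set.Icc 0 (wbar t) :=
    fun t y => ⟨hwbar2fnn t y, hwbar2fle t y⟩
  have : Nonempty (Fin N) := ⟨k 0⟩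
  calc _ ≤ ((N : ℝ) ^ (T + 1))⁻¹ * #(Fintype.piFinset fun t => univ.erase (k t)) * Z +
        (1 - (1 - 1 / (N : ℝ)) ^ (T + 1)) * (wbar1 * ∏ t, wbar t) :=
      integral_mul_le_of_le_sum _ (dZbar_nonneg k · hw1 hwt hwbar1f hwbar2f)
        (piTildeDens_nonneg hw1nn hwtnn hq hZpos.le k) (dZbar_le k · hw1 hwt hwbar1f hwbar2f)
        (integrable_and_integral_piTildeDens hqm hq (fun _ => rfl) hWint hWZ hZpos.ne' k)
        fun i hi => integrable_and_integral_pathW_mul_piTildeDens hqm hq (fun _ => rfl) hWint hWZ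
          hZpos.ne' (by simpa using hi)
    _ = _ := by
      rw [card_piFinset_erase, Fintype.card_fin, Fintype.card_fin,
        one_sub_div (Nat.cast_ne_zero.2 (k 0).pos.ne'), div_pow, div_eq_inv_mul]

/-- Crude bound on the expected upper bound `Z̄` under `π̃`:
`E_π̃[Z̄] ≤ (1 - 1/N)ᵀ Z + (1 - (1 - 1/N)ᵀ) ∏ₜ w̄ₜ`. -/
theorem expected_dZbar_crude_bound
    {X : Type*} [MeasurableSpace X] (μ : Measure X) [SigmaFinite μ]
    (T N : ℕ) (hN : 1 ≤ N)
    (q : Fin (T + 1) → X → ℝ)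
    (hqm : ∀ t, Measurable (q t)) (hqpos : ∀ t y, 0 < q t y)
    (hqprob : ∀ t, ∫ y, q t y ∂μ = 1)
    (w1 : X → ℝ) (wt : Fin T → X → X → ℝ)
    (hw1m : Measurable w1) (hwtm : ∀ t, Measurable (Function.uncurry (wt t)))
    (hw1nn : ∀ y, 0 ≤ w1 y) (hwtnn : ∀ t y y', 0 ≤ wt t y y')
    (Z : ℝ)
    (hZ : Z = ∫ z : Fin (T + 1) → X, pathW T w1 wt z * ∏ t, q t (z t)
        ∂(Measure.pi fun _ : Fin (T + 1) => μ))
    (hZpos : 0 < Z)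
    (hγint : Integrable (fun z : Fin (T + 1) → X => pathW T w1 wt z * ∏ t, q t (z t))
        (Measure.pi fun _ : Fin (T + 1) => μ))
    (wbar1 : ℝ) (wbar : Fin T → ℝ) (wbar1f wbar2f : Fin T → X → ℝ)
    (hwbar1fnn : ∀ t y, 0 ≤ wbar1f t y) (hwbar2fnn : ∀ t y, 0 ≤ wbar2f t y)
    (hw1le : ∀ y, w1 y ≤ wbar1)
    (hwtle : ∀ t y y', wt t y y' ≤ wbar t)
    (hwbar1fle : ∀ t y, wbar1f t y ≤ wbar t)
    (hwbar2fle : ∀ t y, wbar2f t y ≤ wbar t)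
    (k : Fin (T + 1) → Fin N) :
    ∫ x : Fin (T + 1) → Fin N → X,
        dZbar T N w1 wt wbar1 wbar wbar1f wbar2f k x *
          piTildeDens T N w1 wt q Z k x
        ∂(Measure.pi fun _ : Fin (T + 1) => Measure.pi fun _ : Fin N => μ)
      ≤ (1 - 1 / (N : ℝ)) ^ (T + 1) * Z +
        (1 - (1 - 1 / (N : ℝ)) ^ (T + 1)) * (wbar1 * ∏ t, wbar t) :=
  expected_dZbar_crude_bound_general μ T N q hqm hqpos hqprob w1 wt hw1nn hwtnn Z hZ hZpos hγint
    wbar1 wbar wbar1f wbar2f hwbar1fnn hwbar2fnn hw1le hwtle hwbar1fle hwbar2fle k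
end
end
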